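/- A global minimizer of the ℓ2-Potts functional G_λ(x) = (1/2)‖y-x‖² + λ‖Lx‖_0 exists for every y ∈ ℝ^N and λ > 0, and every minimizer is piecewise constant with amplitudes on each segment equal to the mean of y over that segment. -/

import Mathlib

open Finset

noncomputable def l0diff {N : ℕ} (x : Fin N → ℝ) : ℕ :=
  (Finset.univ.filter (fun i : Fin (N - 1) =>
    x ⟨i.val + 1, by have := i.isLt; omega⟩ ≠ x ⟨i.val, by have := i.isLt; omega⟩)).card

/-!
Replace a signal `x`, on each of its segments (the maximal runs between two jumps), by the mean
of `y` over that segment. This creates no new jump, and since `y` minus its segment means is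
orthogonal to every function constant on the segments, it lowers the data term by exactly
`∑ (mean - x)²`. So a minimizer agrees with its segment means, and the minimum may be sought among
the finitely many signals `i ↦ mean of y over c i`, `c : Fin N → Finset (Fin N)`.
-/

open Function

theorem Monotone.exists_monotone_surjective_fin {α β : Type*} [Fintype α] [Preorder α]
    [LinearOrder β] {f : α → β} (hf : Monotone f) :
    ∃ (K : ℕ) (g : α → Fin K), Monotone g ∧ Surjective g ∧ ∀ a b, g a = g b ↔ f a = f b := by
  classical
  let e := (univ.image f).orderIsoOfFin rfl
  refine ⟨_, fun a => e.symm ⟨f a, mem_image_of_mem f (mem_univ a)⟩, fun a b hab => ?_, fun k => ?_,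
    fun _ _ => by simp⟩
  · exact e.symm.monotone (Subtype.mk_le_mk.2 (hf hab))
  · obtain ⟨a, -, ha⟩ := mem_image.1 (e k).2
    exact ⟨a, by simp [ha]⟩

theorem Fin.apply_eq_of_monotone_apply_eq {n : ℕ} {α β : Type*} [PartialOrder β]
    {r : Fin (n + 1) → β} (hr : Monotone r) {x : Fin (n + 1) → α}
    (hstep : ∀ j : Fin n, r j.succ = r j.castSucc → x j.succ = x j.castSucc)
    {i i' : Fin (n + 1)} (h : r i = r i') : x i = x i' := by
  suffices key : ∀ i' i, i ≤ i' → r i = r i' → x i = x i' by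
    rcases le_total i i' with hle | hle
    exacts [key _ _ hle h, (key _ _ hle h.symm).symm]
  intro i'
  induction i' using Fin.induction with
  | zero => intro i hi _; rw [nonpos_iff_eq_zero.1 hi]
  | succ j ih =>
    intro i hi hri
    rcases hi.eq_or_lt with rfl | hlt
    · rfl
    have hij : i ≤ j.castSucc := Fin.le_castSucc_iff.2 hlt
    have hj : r j.succ = r j.castSucc :=
      le_antisymm (hri ▸ hr hij) (hr Fin.castSucc_lt_succ.le)
    rw [ih i hij (le_antisymm (hr hij) (hri ▸ hj ▸ le_rfl)), hstep j hj]

section JumpCount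

variable {n : ℕ} {α : Type*} [DecidableEq α]

def jumpCount (x : Fin (n + 1) → α) (i : Fin (n + 1)) : ℕ :=
  #{j : Fin n | x j.succ ≠ x j.castSucc ∧ j.castSucc < i}

theorem monotone_jumpCount (x : Fin (n + 1) → α) : Monotone (jumpCount x) :=
  fun _ _ hii' => card_le_card (monotone_filter_right _ fun _ _ h => ⟨h.1, h.2.trans_le hii'⟩)

theorem jumpCount_succ_of_eq (x : Fin (n + 1) → α) {j : Fin n} (h : x j.succ = x j.castSucc) :
    jumpCount x j.succ = jumpCount x j.castSucc := by
  unfold jumpCount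
  congr 1
  ext t
  simp only [mem_filter, mem_univ, true_and, Fin.castSucc_lt_succ_iff,
    Fin.castSucc_lt_castSucc_iff, and_congr_right_iff]
  exact fun ht => ⟨fun hle => hle.lt_of_ne (by rintro rfl; exact ht h), le_of_lt⟩

theorem jumpCount_castSucc_lt_succ (x : Fin (n + 1) → α) {j : Fin n}
    (h : x j.succ ≠ x j.castSucc) : jumpCount x j.castSucc < jumpCount x j.succ := by
  refine card_lt_card ((ssubset_iff_of_subset ?_).2 ⟨j, ?_, ?_⟩)
  · exact monotone_filter_right _ fun _ _ ht => ⟨ht.1, ht.2.trans Fin.castSucc_lt_succ⟩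
  · simp [h]
  · simp

theorem eq_of_jumpCount_eq (x : Fin (n + 1) → α) {i i' : Fin (n + 1)}
    (h : jumpCount x i = jumpCount x i') : x i = x i' :=
  Fin.apply_eq_of_monotone_apply_eq (monotone_jumpCount x)
    (fun _ hj => not_not.1 fun hne => (jumpCount_castSucc_lt_succ x hne).ne' hj) h

end JumpCount

/-- The fibers of `seg` are the segments of `x`: `x` is constant on each, and the last field says
that `x` jumps at every boundary between two of them. -/
structure IsSegmentation {N K : ℕ} (x : Fin N → ℝ) (seg : Fin N → Fin K) : Prop where
  monotone : Monotone seg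
  surjective : Surjective seg
  factorsThrough : x.FactorsThrough seg
  l0diff_le : ∀ z : Fin N → ℝ, z.FactorsThrough seg → l0diff z ≤ l0diff x

theorem l0diff_eq_card {n : ℕ} (x : Fin (n + 1) → ℝ) :
    l0diff x = #{j : Fin n | x j.succ ≠ x j.castSucc} :=
  rfl

theorem exists_isSegmentation : ∀ {N : ℕ} (x : Fin N → ℝ), ∃ (K : ℕ) (seg : Fin N → Fin K),
    IsSegmentation x seg
  | 0, _ => ⟨0, id, monotone_id, surjective_id, fun i => i.elim0, fun _ _ => by simp [l0diff]⟩
  | n + 1, x => by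
    obtain ⟨K, seg, hmono, hsurj, hseg⟩ := (monotone_jumpCount x).exists_monotone_surjective_fin
    refine ⟨K, seg, hmono, hsurj, fun i i' h => eq_of_jumpCount_eq x ((hseg i i').1 h),
      fun z hz => ?_⟩
    rw [l0diff_eq_card, l0diff_eq_card]
    refine card_le_card (monotone_filter_right _ fun j _ hzj hxj => hzj (hz ?_))
    exact (hseg _ _).2 (jumpCount_succ_of_eq x hxj)

theorem Finset.sum_sub_sum_div_card {ι : Type*} (s : Finset ι) (y : ι → ℝ) :
    ∑ i ∈ s, (y i - (∑ j ∈ s, y j) / #s) = 0 := by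
  rcases s.eq_empty_or_nonempty with rfl | hs
  · simp
  · rw [sum_sub_distrib, sum_const, nsmul_eq_mul, mul_div_cancel₀ _ (by positivity), sub_self]

section FiberMean

variable {ι κ : Type*} [Fintype ι] [DecidableEq κ]

noncomputable def fiberMean (seg : ι → κ) (y : ι → ℝ) (k : κ) : ℝ :=
  (∑ i with seg i = k, y i) / #{i | seg i = k}

theorem sum_sub_fiberMean_mul (seg : ι → κ) (y : ι → ℝ) (c : κ → ℝ) :
    ∑ i, (y i - fiberMean seg y (seg i)) * c (seg i) = 0 := by
  rw [← sum_fiberwise_of_maps_to fun i _ => mem_image_of_mem seg (mem_univ i)]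
  refine sum_eq_zero fun k _ => ?_
  calc ∑ i with seg i = k, (y i - fiberMean seg y (seg i)) * c (seg i)
      = (∑ i with seg i = k, (y i - fiberMean seg y k)) * c k := by
        rw [sum_mul]
        exact sum_congr rfl fun i hi => by rw [(mem_filter.1 hi).2]
    _ = 0 := by rw [fiberMean, sum_sub_sum_div_card, zero_mul]

theorem sum_sq_sub_comp_eq (seg : ι → κ) (y : ι → ℝ) (μ : κ → ℝ) :
    ∑ i, (y i - μ (seg i)) ^ 2 =
      ∑ i, (y i - fiberMean seg y (seg i)) ^ 2
        + ∑ i, (fiberMean seg y (seg i) - μ (seg i)) ^ 2 := by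
  have hcross := sum_sub_fiberMean_mul seg y fun k => fiberMean seg y k - μ k
  calc ∑ i, (y i - μ (seg i)) ^ 2
      = ∑ i, ((y i - fiberMean seg y (seg i)) ^ 2
          + 2 * ((y i - fiberMean seg y (seg i)) * (fiberMean seg y (seg i) - μ (seg i)))
          + (fiberMean seg y (seg i) - μ (seg i)) ^ 2) := sum_congr rfl fun i _ => by ring
    _ = _ := by rw [sum_add_distrib, sum_add_distrib, ← mul_sum, hcross, mul_zero, add_zero]

end FiberMean

theorem exists_forall_le_of_forall_exists_mem_le {α β : Type*} [Nonempty α] [LinearOrder β]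
    {f : α → β} (s : Finset α) (h : ∀ z, ∃ w ∈ s, f w ≤ f z) : ∃ x, ∀ z, f x ≤ f z := by
  obtain ⟨w, hw, -⟩ := h (Classical.arbitrary α)
  obtain ⟨x, -, hx⟩ := s.exists_min_image f ⟨w, hw⟩
  exact ⟨x, fun z => let ⟨w, hw, hwz⟩ := h z; (hx w hw).trans hwz⟩

section Potts

variable {N : ℕ} (y : Fin N → ℝ) (lam : ℝ)

noncomputable def pottsEnergy (x : Fin N → ℝ) : ℝ :=
  (1 / 2) * ∑ i, (y i - x i) ^ 2 + lam * (l0diff x : ℝ)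

variable {y lam}

theorem pottsEnergy_fiberMean_add_le (hlam : 0 ≤ lam) {K : ℕ} {x : Fin N → ℝ}
    {seg : Fin N → Fin K} (hseg : IsSegmentation x seg) :
    pottsEnergy y lam (fun i => fiberMean seg y (seg i))
      + (1 / 2) * ∑ i, (fiberMean seg y (seg i) - x i) ^ 2 ≤ pottsEnergy y lam x := by
  have hx : ∀ i, x i = extend seg x 0 (seg i) := fun i =>
    (hseg.factorsThrough.extend_apply _ i).symm
  have hdata := sum_sq_sub_comp_eq seg y (extend seg x 0)
  simp only [← hx] at hdata
  have hjumps : (l0diff fun i => fiberMean seg y (seg i) : ℝ) ≤ l0diff x := by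
    exact_mod_cast hseg.l0diff_le _ fun i i' h => by simp only [h]
  unfold pottsEnergy
  linarith [mul_le_mul_of_nonneg_left hjumps hlam]

theorem exists_forall_pottsEnergy_le (hlam : 0 ≤ lam) :
    ∃ x, ∀ z, pottsEnergy y lam x ≤ pottsEnergy y lam z := by
  classical
  refine exists_forall_le_of_forall_exists_mem_le
    (univ.image fun (c : Fin N → Finset (Fin N)) i => (∑ j ∈ c i, y j) / #(c i)) fun z => ?_
  obtain ⟨K, seg, hseg⟩ := exists_isSegmentation z
  refine ⟨_, mem_image_of_mem _ (mem_univ fun i => ({j | seg j = seg i} : Finset _)), ?_⟩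
  exact (le_add_of_nonneg_right (by positivity)).trans (pottsEnergy_fiberMean_add_le hlam hseg)

theorem eq_fiberMean_of_forall_pottsEnergy_le (hlam : 0 ≤ lam) {K : ℕ} {x : Fin N → ℝ}
    {seg : Fin N → Fin K} (hseg : IsSegmentation x seg)
    (hx : ∀ z, pottsEnergy y lam x ≤ pottsEnergy y lam z) (i : Fin N) :
    x i = fiberMean seg y (seg i) := by
  have hsum : ∑ i, (fiberMean seg y (seg i) - x i) ^ 2 ≤ 0 := by
    linarith [pottsEnergy_fiberMean_add_le (y := y) hlam hseg, hx fun i => fiberMean seg y (seg i)]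
  have hi := (sum_eq_zero_iff_of_nonneg fun i _ => sq_nonneg _).1 (hsum.antisymm (by positivity))
    i (mem_univ i)
  exact (sub_eq_zero.1 (pow_eq_zero_iff two_ne_zero |>.1 hi)).symm

end Potts

theorem potts_minimizer_exists_and_structure_general (N : ℕ) (y : Fin N → ℝ)
    (lam : ℝ) (hlam : 0 < lam) :
    (∃ x : Fin N → ℝ, ∀ z : Fin N → ℝ,
        (1 / 2) * ∑ i, (y i - x i) ^ 2 + lam * (l0diff x : ℝ) ≤
        (1 / 2) * ∑ i, (y i - z i) ^ 2 + lam * (l0diff z : ℝ)) ∧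
    (∀ x : Fin N → ℝ,
      (∀ z : Fin N → ℝ,
        (1 / 2) * ∑ i, (y i - x i) ^ 2 + lam * (l0diff x : ℝ) ≤
        (1 / 2) * ∑ i, (y i - z i) ^ 2 + lam * (l0diff z : ℝ)) →
      ∃ (K : ℕ) (seg : Fin N → Fin K), Monotone seg ∧ Function.Surjective seg ∧
        ∃ μ : Fin K → ℝ, (∀ i, x i = μ (seg i)) ∧
          ∀ k, μ k = (∑ i ∈ Finset.univ.filter (fun i => seg i = k), y i) /
            ((Finset.univ.filter (fun i => seg i = k)).card : ℝ)) := by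
  refine ⟨exists_forall_pottsEnergy_le hlam.le, fun x hx => ?_⟩
  obtain ⟨K, seg, hseg⟩ := exists_isSegmentation x
  exact ⟨K, seg, hseg.monotone, hseg.surjective, fiberMean seg y,
    eq_fiberMean_of_forall_pottsEnergy_le hlam.le hseg hx, fun _ => rfl⟩

/-- A global minimizer of the ℓ2-Potts functional exists, and every minimizer is
piecewise constant with segment amplitudes equal to the segment means of `y`. -/
theorem potts_minimizer_exists_and_structure (N : ℕ) (hN : 1 ≤ N) (y : Fin N → ℝ)
    (lam : ℝ) (hlam : 0 < lam) :
    (∃ x : Fin N → ℝ, ∀ z : Fin N → ℝ,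
        (1 / 2) * ∑ i, (y i - x i) ^ 2 + lam * (l0diff x : ℝ) ≤
        (1 / 2) * ∑ i, (y i - z i) ^ 2 + lam * (l0diff z : ℝ)) ∧
    (∀ x : Fin N → ℝ,
      (∀ z : Fin N → ℝ,
        (1 / 2) * ∑ i, (y i - x i) ^ 2 + lam * (l0diff x : ℝ) ≤
        (1 / 2) * ∑ i, (y i - z i) ^ 2 + lam * (l0diff z : ℝ)) →
      ∃ (K : ℕ) (seg : Fin N → Fin K), Monotone seg ∧ Function.Surjective seg ∧
        ∃ μ : Fin K → ℝ, (∀ i, x i = μ (seg i)) ∧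
          ∀ k, μ k = (∑ i ∈ Finset.univ.filter (fun i => seg i = k), y i) /
            ((Finset.univ.filter (fun i => seg i = k)).card : ℝ)) :=
  potts_minimizer_exists_and_structure_general N y lam hlam
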